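/- There exist infinitely differentiable functions f, g : ℝ → ℝ with f(0) = g(0) = 0, such that f and g are strictly monotone increasing on the interval [0, π], f(x) ≤ g(x) for all x ∈ [0, π], and yet ∫₀^π f′(x)² dx > ∫₀^π g′(x)² dx. -/

import Mathlib

open Real

/-- The spiky function `f x = (12/25)∫₀ˣ (1 - cos 2t)² dt`. -/
noncomputable def fCtr : ℝ → ℝ := fun x =>
  18/25 * x - 12/25 * Real.sin (2*x) + 3/50 * Real.sin (4*x)

/-- Antiderivative of `(deriv fCtr)²`. -/
noncomputable def PhiCtr : ℝ → ℝ := fun x =>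
  144/625 * (35/8 * x - 4 * Real.sin (2*x) + 7/8 * Real.sin (4*x)
    + 2/3 * (Real.sin (2*x))^3 + Real.sin (8*x) / 64)

lemma hasDerivAt_sin_cmul (k x : ℝ) :
    HasDerivAt (fun y : ℝ => Real.sin (k*y)) (Real.cos (k*x) * k) x := by
  have h1 : HasDerivAt (fun y : ℝ => k*y) k x := by
    simpa using (hasDerivAt_id x).const_mul k
  exact (Real.hasDerivAt_sin (k*x)).comp x h1

lemma fCtr_hasDeriv (x : ℝ) :
    HasDerivAt fCtr (12/25 * (1 - Real.cos (2*x))^2) x := by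
  have h : HasDerivAt fCtr
      (18/25 * 1 - 12/25 * (Real.cos (2*x) * 2) + 3/50 * (Real.cos (4*x) * 4)) x := by
    exact (((hasDerivAt_id x).const_mul (18/25 : ℝ)).sub
      ((hasDerivAt_sin_cmul 2 x).const_mul (12/25))).add
      ((hasDerivAt_sin_cmul 4 x).const_mul (3/50))
  convert h using 1
  have c4 : Real.cos (4*x) = 2*Real.cos (2*x)^2 - 1 := by
    rw [show (4:ℝ)*x = 2*(2*x) by ring]; exact Real.cos_two_mul (2*x)
  rw [c4]; ring

lemma fCtr_deriv (x : ℝ) : deriv fCtr x = 12/25 * (1 - Real.cos (2*x))^2 :=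
  (fCtr_hasDeriv x).deriv

lemma PhiCtr_hasDeriv (x : ℝ) :
    HasDerivAt PhiCtr ((12/25 * (1 - Real.cos (2*x))^2)^2) x := by
  have h : HasDerivAt PhiCtr
      (144/625 * (35/8 * 1 - 4 * (Real.cos (2*x) * 2) + 7/8 * (Real.cos (4*x) * 4)
        + 2/3 * (3 * (Real.sin (2*x))^2 * (Real.cos (2*x) * 2))
        + (Real.cos (8*x) * 8) / 64)) x := by
    have hcube : HasDerivAt (fun y : ℝ => (Real.sin (2*y))^3)
        (3 * (Real.sin (2*x))^2 * (Real.cos (2*x) * 2)) x := by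
      simpa using (hasDerivAt_sin_cmul 2 x).fun_pow 3
    exact (((((hasDerivAt_id x).const_mul (35/8 : ℝ)).sub
      ((hasDerivAt_sin_cmul 2 x).const_mul 4)).add
      ((hasDerivAt_sin_cmul 4 x).const_mul (7/8))).add
      (hcube.const_mul (2/3))).add
      ((hasDerivAt_sin_cmul 8 x).div_const 64) |>.const_mul (144/625)
  convert h using 1
  have c8 : Real.cos (8*x) = 2*Real.cos (4*x)^2 - 1 := by
    rw [show (8:ℝ)*x = 2*(4*x) by ring]; exact Real.cos_two_mul (4*x)
  have c4 : Real.cos (4*x) = 2*Real.cos (2*x)^2 - 1 := by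
    rw [show (4:ℝ)*x = 2*(2*x) by ring]; exact Real.cos_two_mul (2*x)
  have s2 : Real.sin (2*x)^2 = 1 - Real.cos (2*x)^2 := Real.sin_sq _
  rw [c8, c4, s2]; ring

lemma fCtr_le (x : ℝ) (hx0 : 0 ≤ x) (hxpi : x ≤ π) : fCtr x ≤ x := by
  unfold fCtr
  rcases le_or_gt x (π/2) with h1 | h1
  · -- sin 2x ≥ 0, sin 4x = 2 sin 2x cos 2x
    have hs : 0 ≤ Real.sin (2*x) :=
      Real.sin_nonneg_of_nonneg_of_le_pi (by linarith) (by linarith)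
    have h4 : Real.sin (4*x) = 2 * Real.sin (2*x) * Real.cos (2*x) := by
      rw [show (4:ℝ)*x = 2*(2*x) by ring, Real.sin_two_mul]
    have hc : Real.cos (2*x) ≤ 1 := Real.cos_le_one _
    nlinarith [hs, hc, hx0]
  · rcases le_or_gt x (5*π/8) with h2 | h2
    · -- middle case: use sin t ≤ t bounds
      have hA : -Real.sin (2*x) ≤ 2*x - π := by
        have := Real.sin_le (x := 2*x - π) (by linarith)
        rwa [Real.sin_sub_pi] at this
      have hB : Real.sin (4*x) ≤ 4*x - 2*π := by
        have := Real.sin_le (x := 4*x - 2*π) (by linarith)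
        rwa [Real.sin_sub_two_pi] at this
      have hpi : 0 < π := Real.pi_pos
      nlinarith [hA, hB, hpi, h1, h2]
    · -- tail case: crude bounds plus 7π/40 > 27/50
      have hA : -Real.sin (2*x) ≤ 1 := by
        have := Real.neg_one_le_sin (2*x); linarith
      have hB : Real.sin (4*x) ≤ 1 := Real.sin_le_one _
      have hpi : π > 3.141592 := Real.pi_gt_d6
      nlinarith [hA, hB, hpi, h2]

theorem volume_formula_not_monotone :
    ∃ f g : ℝ → ℝ, ContDiff ℝ (⊤ : ℕ∞) f ∧ ContDiff ℝ (⊤ : ℕ∞) g ∧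
      f 0 = 0 ∧ g 0 = 0 ∧
      StrictMonoOn f (Set.Icc 0 π) ∧ StrictMonoOn g (Set.Icc 0 π) ∧
      (∀ x ∈ Set.Icc (0 : ℝ) π, f x ≤ g x) ∧
      (∫ x in (0 : ℝ)..π, (deriv f x) ^ 2) > ∫ x in (0 : ℝ)..π, (deriv g x) ^ 2 := by
  refine ⟨fCtr, id, ?_, contDiff_id, ?_, rfl, ?_, fun a _ b _ h => h, ?_, ?_⟩
  · -- smoothness of f
    unfold fCtr
    exact ((contDiff_const.mul contDiff_id).sub
      (contDiff_const.mul (Real.contDiff_sin.comp (contDiff_const.mul contDiff_id)))).add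
      (contDiff_const.mul (Real.contDiff_sin.comp (contDiff_const.mul contDiff_id)))
  · simp [fCtr]
  · -- strict monotonicity of f
    have hcont : ContinuousOn fCtr (Set.Icc 0 π) :=
      (fun x _ => ((fCtr_hasDeriv x).continuousAt).continuousWithinAt)
    apply strictMonoOn_of_deriv_pos (convex_Icc 0 π) hcont
    intro x hx
    rw [interior_Icc] at hx
    rw [fCtr_deriv]
    have hc : Real.cos (2*x) < 1 := by
      rcases lt_or_eq_of_le (Real.cos_le_one (2*x)) with h | h
      · exact h
      · exfalso
        have h2 : (2:ℝ)*x = 0 := by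
          have := (Real.cos_eq_one_iff_of_lt_of_lt
            (x := 2*x) (by nlinarith [hx.1, Real.pi_pos]) (by nlinarith [hx.2])).mp h
          exact this
        nlinarith [hx.1]
    have hpos : 0 < 1 - Real.cos (2*x) := by linarith
    have : 0 < (1 - Real.cos (2*x))^2 := pow_pos hpos 2
    linarith [mul_pos (by norm_num : (0:ℝ) < 12/25) this]
  · intro x hx; exact fCtr_le x hx.1 hx.2
  · -- the integral inequality
    have hfd : (fun x => (deriv fCtr x)^2)
        = fun x => ((12/25) * (1 - Real.cos (2*x))^2)^2 := by
      funext x; rw [fCtr_deriv]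
    have hint : IntervalIntegrable (fun x => ((12/25) * (1 - Real.cos (2*x))^2)^2)
        MeasureTheory.volume 0 π := by
      apply Continuous.intervalIntegrable
      continuity
    have key : (∫ x in (0:ℝ)..π, ((12/25) * (1 - Real.cos (2*x))^2)^2)
        = PhiCtr π - PhiCtr 0 :=
      intervalIntegral.integral_eq_sub_of_hasDerivAt (fun x _ => PhiCtr_hasDeriv x) hint
    have hsin2 : Real.sin (2*π) = 0 := Real.sin_two_pi
    have hsin4 : Real.sin (4*π) = 0 := by
      have := Real.sin_nat_mul_pi 4; push_cast at this; exact this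
    have hsin8 : Real.sin (8*π) = 0 := by
      have := Real.sin_nat_mul_pi 8; push_cast at this; exact this
    have hPhi : PhiCtr π - PhiCtr 0 = 126/125 * π := by
      unfold PhiCtr
      rw [hsin2, hsin4, hsin8]
      norm_num
      ring
    have hg : (fun x : ℝ => (deriv (id : ℝ → ℝ) x)^2) = fun _ => (1:ℝ) := by
      funext x; simp
    rw [hfd, key, hPhi]
    have : (∫ x in (0:ℝ)..π, (deriv (id : ℝ → ℝ) x)^2) = π := by
      rw [hg]; simp
    rw [this]
    nlinarith [Real.pi_pos]
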